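/- Let V be a rank-one valuation domain with valuation v, {x_n} a pseudo-convergent sequence in E ⊆ V with pseudo-limit x ∈ V, and suppose every f ∈ Int(E,V) satisfies f(x) ∈ V (x is in the polynomial closure of E). Then the maximal ideals m_x = {f ∈ Int(E,V) | v(f(x)) > 0} and m_{{x_n}} = {f ∈ Int(E,V) | f(x_n) ∈ m for almost all n} satisfy m_{{x_n}} ⊆ m_x. -/

import Mathlib

open Polynomial

/-- The valuation ring of a rank-one (real-valued, additive) valuation on a field `K`:
the subring of elements of nonnegative valuation. -/
noncomputable def valRing (K : Type*) [Field K] (v : AddValuation K (WithTop ℝ)) :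
    Subring K where
  carrier := {x | 0 ≤ v x}
  zero_mem' := by simp [Set.mem_setOf_eq, AddValuation.map_zero]
  one_mem' := by simp [Set.mem_setOf_eq]
  add_mem' := fun {a b} ha hb => le_trans (le_min ha hb) (v.map_add a b)
  mul_mem' := fun {a b} ha hb => by
    simp only [Set.mem_setOf_eq, v.map_mul]; exact add_nonneg ha hb
  neg_mem' := fun {a} ha => by simpa [v.map_neg] using ha

lemma mem_valRing {K : Type*} [Field K] {v : AddValuation K (WithTop ℝ)} {x : K} :
    x ∈ valRing K v ↔ 0 ≤ v x := Iff.rfl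

/-- The ring of integer-valued polynomials `Int(E,V)` for `V` the valuation ring
of `v`, as a subring of `K[X]`. -/
noncomputable def IntD (K : Type*) [Field K] (v : AddValuation K (WithTop ℝ))
    (E : Set K) : Subring (Polynomial K) :=
  ⨅ x ∈ E, (valRing K v).comap (Polynomial.evalRingHom x)

lemma mem_IntD {K : Type*} [Field K] {v : AddValuation K (WithTop ℝ)} {E : Set K}
    {f : Polynomial K} : f ∈ IntD K v E ↔ ∀ x ∈ E, 0 ≤ v (f.eval x) := by
  simp [IntD, Subring.mem_iInf, Subring.mem_comap, mem_valRing]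

lemma C_mem_IntD {K : Type*} [Field K] {v : AddValuation K (WithTop ℝ)} {E : Set K}
    {y : K} (hy : 0 ≤ v y) : Polynomial.C y ∈ IntD K v E := by
  rw [mem_IntD]; intro x hx; simpa using hy

open Filter

/-!
If `f(xl)` were a unit while `f(x n) ∈ m` eventually, then `v (f(x n) - f(xl)) = 0` for all large
`n`. Expanding `h = f - f(xl)` around `xl`, `h(x n) = ∑_{i ≥ 1} cᵢ (x n - xl)^i`, and the term
valuations `v cᵢ + i * v (x n - xl)` are affine functions of `v (x n - xl)` with distinct slopes.
As `v (x n - xl)` is strictly increasing, for all but finitely many `n` exactly one term has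
minimal valuation, so `v (h(x n))` equals that minimum, which strictly increases with `n` since
all exponents are positive. Hence `v (h(x n))` cannot be eventually constant.
-/

lemma eventually_cofinite_exists_unique_argmin {α ι : Type*} {s : Finset ι} (hs : s.Nonempty)
    {m : ι → ℝ} (hm : Set.InjOn m s) (c : ι → ℝ) {g : α → ℝ} (hg : g.Injective) :
    ∀ᶠ a in cofinite, ∃ i ∈ s, ∀ j ∈ s, j ≠ i → c i + m i * g a < c j + m j * g a := by
  have tie_subsingleton : ∀ p ∈ s.offDiag,
      {a | c p.1 + m p.1 * g a = c p.2 + m p.2 * g a}.Subsingleton := by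
    intro p hp a ha b hb
    obtain ⟨hp1, hp2, hne⟩ := Finset.mem_offDiag.1 hp
    have hslope : m p.1 - m p.2 ≠ 0 := sub_ne_zero.2 (hm.ne hp1 hp2 hne)
    have hprod : (m p.1 - m p.2) * (g a - g b) = 0 := by
      simp only [Set.mem_ofPred_eq] at ha hb
      linear_combination ha - hb
    exact hg (sub_eq_zero.1 ((mul_eq_zero.1 hprod).resolve_left hslope))
  have ties_finite : (⋃ p ∈ s.offDiag, {a | c p.1 + m p.1 * g a = c p.2 + m p.2 * g a}).Finite :=
    s.offDiag.finite_toSet.biUnion fun p hp => (tie_subsingleton p hp).finite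
  filter_upwards [ties_finite.compl_mem_cofinite] with a ha
  obtain ⟨i, hi, hmin⟩ := s.exists_min_image (fun i => c i + m i * g a) hs
  refine ⟨i, hi, fun j hj hji => lt_of_le_of_ne (hmin j hj) fun heq => ha ?_⟩
  exact Set.mem_biUnion (x := (i, j)) (Finset.mem_offDiag.2 ⟨hi, hj, hji.symm⟩) heq

lemma StrictMono.exists_eq_coe {α β : Type*} [Preorder α] [NoMaxOrder α] [Preorder β]
    {f : α → WithTop β} (hf : StrictMono f) : ∃ g : α → β, StrictMono g ∧ ∀ a, f a = g a := by
  choose g hg using fun a =>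
    WithTop.ne_top_iff_exists.1 (hf (exists_gt a).choose_spec).ne_top
  refine ⟨g, fun a b hab => WithTop.coe_lt_coe.1 ?_, fun a => (hg a).symm⟩
  rw [hg a, hg b]
  exact hf hab

namespace AddValuation

theorem map_sum_eq_of_lt {R Γ₀ : Type*} [CommRing R] [LinearOrderedAddCommMonoidWithTop Γ₀]
    (v : AddValuation R Γ₀) {ι : Type*} [DecidableEq ι] {s : Finset ι} {f : ι → R} {j : ι}
    (hj : j ∈ s) (hf : ∀ i ∈ s \ {j}, v (f j) < v (f i)) :
    v (∑ i ∈ s, f i) = v (f j) :=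
  v.toValuation.map_sum_eq_of_lt hj hf

variable {K : Type*} [Field K] (v : AddValuation K (WithTop ℝ))

theorem exists_strictMonoOn_eval_of_coeff_zero {H : K[X]} (hH : H ≠ 0) (h0 : H.coeff 0 = 0)
    {y : ℕ → K} (hy : StrictMono fun n => v (y n)) :
    ∃ N, StrictMonoOn (fun n => v (H.eval (y n))) (Set.Ici N) := by
  classical
  obtain ⟨g, hg, hvy⟩ := hy.exists_eq_coe
  choose! c hc using fun i (hi : i ∈ H.support) =>
    WithTop.ne_top_iff_exists.1 (v.ne_top_iff.2 (mem_support_iff.1 hi))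
  have hterm : ∀ n, ∀ i ∈ H.support,
      v (H.coeff i * y n ^ i) = ((c i + i * g n : ℝ) : WithTop ℝ) := by
    intro n i hi
    rw [v.map_mul, v.map_pow, ← hc i hi, hvy n, ← WithTop.coe_nsmul, ← WithTop.coe_add,
      nsmul_eq_mul]
  have hexp_pos : ∀ i ∈ H.support, (0 : ℝ) < i := fun i hi =>
    Nat.cast_pos.2 (Nat.pos_of_ne_zero fun h => mem_support_iff.1 hi (h ▸ h0))
  have hgeneric := eventually_cofinite_exists_unique_argmin (support_nonempty.2 hH)
    Nat.cast_injective.injOn c hg.injective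
  rw [Nat.cofinite_eq_atTop] at hgeneric
  obtain ⟨N, hN⟩ := hgeneric.exists_forall_of_atTop
  refine ⟨N, fun n hn m _ hnm => ?_⟩
  obtain ⟨i, hi, hmin⟩ := hN n hn
  have hlt : ∀ j ∈ H.support, c i + i * g n < c j + j * g m := by
    intro j hj
    calc c i + i * g n ≤ c j + j * g n := by
          rcases eq_or_ne j i with rfl | hji
          · exact le_rfl
          · exact (hmin j hj hji).le
      _ < c j + j * g m := by gcongr; exacts [hexp_pos j hj, hg hnm]
  simp only [eval_eq_sum, sum_def]
  calc v (∑ j ∈ H.support, H.coeff j * y n ^ j) = ((c i + i * g n : ℝ) : WithTop ℝ) := by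
        rw [v.map_sum_eq_of_lt hi, hterm n i hi]
        intro j hj
        obtain ⟨hj, hji⟩ := Finset.mem_sdiff.1 hj
        rw [hterm n i hi, hterm n j hj]
        exact WithTop.coe_lt_coe.2 (hmin j hj (Finset.notMem_singleton.1 hji))
    _ < v (∑ j ∈ H.support, H.coeff j * y m ^ j) :=
        v.map_lt_sum WithTop.coe_ne_top fun j hj => by
          rw [hterm m j hj]
          exact WithTop.coe_lt_coe.2 (hlt j hj)

theorem exists_strictMonoOn_eval_sub_of_pseudoLimit {f : K[X]} {a : K} (hf : f ≠ C (f.eval a))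
    {x : ℕ → K} (hlim : StrictMono fun n => v (a - x n)) :
    ∃ N, StrictMonoOn (fun n => v (f.eval (x n) - f.eval a)) (Set.Ici N) := by
  have hH : taylor a (f - C (f.eval a)) ≠ 0 := by rwa [Ne, taylor_eq_zero, sub_eq_zero]
  have h0 : (taylor a (f - C (f.eval a))).coeff 0 = 0 := by simp [taylor_coeff_zero]
  have hy : StrictMono fun n => v (x n - a) := by simpa only [v.map_sub_swap] using hlim
  simpa [taylor_eval] using v.exists_strictMonoOn_eval_of_coeff_zero hH h0 hy

end AddValuation

theorem stmt_19_general {K : Type*} [Field K] (v : AddValuation K (WithTop ℝ))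
    (E : Set K)
    -- `{x n}` is a pseudo-convergent sequence in `E`
    (x : ℕ → K)
    -- with pseudo-limit `xl ∈ V`
    (xl : K)
    (hlim : StrictMono fun n => v (xl - x n))
    -- `xl` is in the polynomial closure of `E`
    (hclo : ∀ f : Polynomial K, f ∈ IntD K v E → 0 ≤ v (f.eval xl)) :
    -- `m_{{x n}} ⊆ m_xl`
    ∀ f ∈ IntD K v E,
      (∃ N : ℕ, ∀ n : ℕ, N ≤ n → 0 < v (f.eval (x n))) → 0 < v (f.eval xl) := by
  rintro f hf ⟨N, hN⟩
  by_contra hpos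
  have hv0 : v (f.eval xl) = 0 := le_antisymm (not_lt.1 hpos) (hclo f hf)
  have hdiff : ∀ n, N ≤ n → v (f.eval (x n) - f.eval xl) = 0 := fun n hn => by
    rw [v.map_sub_eq_of_lt_right (hv0 ▸ hN n hn), hv0]
  have hnonconst : f ≠ C (f.eval xl) := fun h => by
    have hN' := hN N le_rfl
    rw [h, eval_C, hv0] at hN'
    exact lt_irrefl _ hN'
  obtain ⟨M, hM⟩ := v.exists_strictMonoOn_eval_sub_of_pseudoLimit hnonconst hlim
  have hn : N ≤ max M N := le_max_right M N
  have hstep := hM (Set.mem_Ici.2 (le_max_left M N))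
    (Set.mem_Ici.2 ((le_max_left M N).trans (Nat.le_succ _))) (Nat.lt_succ_self _)
  simp only [hdiff _ hn, hdiff _ (hn.trans (Nat.le_succ _))] at hstep
  exact lt_irrefl _ hstep

theorem stmt_19 {K : Type*} [Field K] (v : AddValuation K (WithTop ℝ))
    (E : Set K) (hE : ∀ x ∈ E, 0 ≤ v x)
    -- `{x n}` is a pseudo-convergent sequence in `E`
    (x : ℕ → K) (hxE : ∀ n, x n ∈ E)
    (hpc : ∀ l m n : ℕ, l < m → m < n → v (x m - x l) < v (x n - x m))
    -- with pseudo-limit `xl ∈ V`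
    (xl : K) (hxlV : 0 ≤ v xl)
    (hlim : StrictMono fun n => v (xl - x n))
    -- `xl` is in the polynomial closure of `E`
    (hclo : ∀ f : Polynomial K, f ∈ IntD K v E → 0 ≤ v (f.eval xl)) :
    -- `m_{{x n}} ⊆ m_xl`
    ∀ f ∈ IntD K v E,
      (∃ N : ℕ, ∀ n : ℕ, N ≤ n → 0 < v (f.eval (x n))) → 0 < v (f.eval xl) :=
  stmt_19_general v E x xl hlim hclo
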